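/- arXiv:1606.02399 — 4 statements merged into one kernel-verified Lean document; each statement's English description precedes it below -/
import Mathlib

section
/- For every vector x ∈ ℝⁿ there exist infinitely many integer vectors q ∈ ℤⁿ and integers p ∈ ℤ such that |p + x · q| < ‖q‖^{-n}, where ‖·‖ denotes the supremum norm and x · q is the standard dot product. -/
/-! Pigeonhole: the `(N + 1)ⁿ` numbers `x · a` with `a ∈ {0, …, N}ⁿ`, reduced mod 1, fall into
`(N + 1)ⁿ - 1 ≥ Nⁿ` intervals of equal length, so two of them differ by less than `N⁻ⁿ`, and the
difference `q` of the two vectors `a` satisfies `‖q‖ ≤ N`. If some nonzero `q` makes `p + x · q`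
vanish, its multiples are infinitely many solutions. Otherwise every solution has
`|p + x · q| > 0`, while letting `N → ∞` produces solutions with `|p + x · q|` arbitrarily small,
which a finite set of solutions cannot do. -/

open Finset Int

theorem exists_ne_abs_fract_sub_fract_lt {ι : Type*} [Fintype ι] (f : ι → ℝ) {K : ℕ}
    (hK : 0 < K) (hcard : K < Fintype.card ι) :
    ∃ a b, a ≠ b ∧ |fract (f a) - fract (f b)| < (K : ℝ)⁻¹ := by
  have hK' : (0 : ℝ) < K := by exact_mod_cast hK
  have hmaps : Set.MapsTo (fun a => ⌊fract (f a) * K⌋) (univ : Finset ι) (Ico (0 : ℤ) K) :=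
    fun a _ => mem_Ico.2 ⟨floor_nonneg.2 (by positivity),
      floor_lt.2 (by exact_mod_cast mul_lt_of_lt_one_left hK' (fract_lt_one _))⟩
  obtain ⟨a, -, b, -, hab, hfloor⟩ :=
    exists_ne_map_eq_of_card_lt_of_maps_to (by simpa using hcard) hmaps
  have hscaled := abs_sub_lt_one_of_floor_eq_floor hfloor
  rw [← sub_mul, abs_mul, abs_of_pos hK'] at hscaled
  refine ⟨a, b, hab, ?_⟩
  rwa [inv_eq_one_div, lt_div_iff₀ hK']

theorem norm_intCast_comp_pos {ι : Type*} [Fintype ι] {q : ι → ℤ} (hq : q ≠ 0) :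
    0 < ‖fun i => (q i : ℝ)‖ :=
  norm_pos_iff.2 fun h => hq (funext fun i => by simpa using congrFun h i)

theorem inv_pow_le_rpow_neg {a b : ℝ} (ha : 0 < a) (hab : a ≤ b) (n : ℕ) :
    (b ^ n)⁻¹ ≤ a ^ (-(n : ℝ)) := by
  rw [Real.rpow_neg ha.le, Real.rpow_natCast]
  exact inv_anti₀ (by positivity) (pow_le_pow_left₀ ha.le hab n)

theorem exists_abs_add_sum_mul_lt_inv_pow {n : ℕ} (hn : 0 < n) (x : Fin n → ℝ) {N : ℕ}
    (hN : 0 < N) :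
    ∃ (p : ℤ) (q : Fin n → ℤ), q ≠ 0 ∧ ‖fun i => (q i : ℝ)‖ ≤ N ∧
      |(p : ℝ) + ∑ i, x i * (q i : ℝ)| < ((N : ℝ) ^ n)⁻¹ := by
  let S : (Fin n → Fin (N + 1)) → ℝ := fun a => ∑ i, x i * ((a i : ℕ) : ℝ)
  have hNK : N ^ n ≤ (N + 1) ^ n - 1 := by
    have := Nat.pow_lt_pow_left (Nat.lt_add_one N) hn.ne'
    omega
  obtain ⟨a, b, hab, hclose⟩ := exists_ne_abs_fract_sub_fract_lt S
    (lt_of_lt_of_le (pow_pos hN n) hNK) (by simp)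
  refine ⟨⌊S b⌋ - ⌊S a⌋, fun i => (a i : ℤ) - (b i : ℤ), fun h => hab ?_, ?_, ?_⟩
  · funext i
    exact Fin.ext (by simpa [sub_eq_zero] using congrFun h i)
  · refine (pi_norm_le_iff_of_nonneg (Nat.cast_nonneg N)).2 fun i => ?_
    have ha := Nat.lt_succ_iff.1 (a i).isLt
    have hb := Nat.lt_succ_iff.1 (b i).isLt
    rw [Real.norm_eq_abs]
    push_cast
    exact abs_sub_le_of_nonneg_of_le (by positivity) (by exact_mod_cast ha) (by positivity)
      (by exact_mod_cast hb)
  · have hval : ((⌊S b⌋ - ⌊S a⌋ : ℤ) : ℝ) + ∑ i, x i * (((a i : ℤ) - (b i : ℤ) : ℤ) : ℝ) =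
        fract (S a) - fract (S b) := by
      simp only [fract, S, Int.cast_sub, Int.cast_natCast, mul_sub, Finset.sum_sub_distrib]
      ring
    rw [hval]
    exact hclose.trans_le (inv_anti₀ (by positivity) (by exact_mod_cast hNK))

theorem Set.infinite_of_forall_lt_of_forall_exists_lt {α β : Type*} [LinearOrder β]
    [NoMaxOrder β] {s : Set α} (v : α → β) {c : β} (hlt : ∀ a ∈ s, c < v a)
    (hsmall : ∀ ε > c, ∃ a ∈ s, v a < ε) : s.Infinite := by
  intro hfin
  obtain ⟨a₀, ha₀, -⟩ := hsmall _ (exists_gt c).choose_spec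
  obtain ⟨a, ha, hmin⟩ := s.exists_min_image v hfin ⟨a₀, ha₀⟩
  obtain ⟨b, hb, hba⟩ := hsmall (v a) (hlt a ha)
  exact (hmin b hb).not_gt hba

theorem infinite_of_add_sum_mul_eq_zero {n : ℕ} (x : Fin n → ℝ) {p : ℤ} {q : Fin n → ℤ}
    (hq : q ≠ 0) (hpq : (p : ℝ) + ∑ i, x i * (q i : ℝ) = 0) :
    {pq : ℤ × (Fin n → ℤ) | pq.2 ≠ 0 ∧
      |(pq.1 : ℝ) + ∑ i, x i * (pq.2 i : ℝ)| <
        ‖(fun i => (pq.2 i : ℝ) : Fin n → ℝ)‖ ^ (-(n : ℝ))}.Infinite := by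
  refine Set.infinite_of_injective_forall_mem
    (f := fun k : ℕ => (((k : ℤ) + 1) * p, ((k : ℤ) + 1) • q)) (fun k l hkl => ?_) fun k => ?_
  · simpa using smul_left_injective ℤ hq (congrArg Prod.snd hkl)
  · have hkq : ((k : ℤ) + 1) • q ≠ 0 := smul_ne_zero (by positivity) hq
    have hval : ((((k : ℤ) + 1) * p : ℤ) : ℝ) + ∑ i, x i * ((((k : ℤ) + 1) • q) i : ℝ) =
        ((k : ℝ) + 1) * ((p : ℝ) + ∑ i, x i * (q i : ℝ)) := by
      simp only [Pi.smul_apply, smul_eq_mul, Int.cast_mul, Int.cast_add, Int.cast_natCast,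
        Int.cast_one, mul_add, Finset.mul_sum]
      ring_nf
    refine ⟨hkq, ?_⟩
    simp only [hval, hpq, mul_zero, abs_zero]
    exact Real.rpow_pos_of_pos (norm_intCast_comp_pos hkq) _

/-- Dirichlet-type theorem for linear forms: for every `x ∈ ℝⁿ` there are infinitely many
pairs `(p, q) ∈ ℤ × ℤⁿ` with `|p + x·q| < ‖q‖^{-n}` (supremum norm). -/
theorem stmt0 (n : ℕ) (hn : 0 < n) (x : Fin n → ℝ) :
    {pq : ℤ × (Fin n → ℤ) | pq.2 ≠ 0 ∧
      |(pq.1 : ℝ) + ∑ i, x i * (pq.2 i : ℝ)| <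
        ‖(fun i => (pq.2 i : ℝ) : Fin n → ℝ)‖ ^ (-(n : ℝ))}.Infinite := by
  by_cases! hzero : ∃ q : Fin n → ℤ, q ≠ 0 ∧ ∃ p : ℤ, (p : ℝ) + ∑ i, x i * (q i : ℝ) = 0
  · obtain ⟨q, hq, p, hpq⟩ := hzero
    exact infinite_of_add_sum_mul_eq_zero x hq hpq
  refine Set.infinite_of_forall_lt_of_forall_exists_lt
    (fun pq : ℤ × (Fin n → ℤ) => |(pq.1 : ℝ) + ∑ i, x i * (pq.2 i : ℝ)|)
    (fun pq hpq => abs_pos.2 (hzero _ hpq.1 _)) fun ε hε => ?_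
  obtain ⟨N, hNε⟩ := exists_nat_one_div_lt hε
  obtain ⟨p, q, hq, hqN, hpq⟩ := exists_abs_add_sum_mul_lt_inv_pow hn x N.add_one_pos
  refine ⟨(p, q), ⟨hq, hpq.trans_le (inv_pow_le_rpow_neg (norm_intCast_comp_pos hq) hqN n)⟩,
    hpq.trans_le ?_⟩
  calc (((N + 1 : ℕ) : ℝ) ^ n)⁻¹ ≤ ((N + 1 : ℕ) : ℝ)⁻¹ :=
        inv_anti₀ (by positivity) (le_self_pow₀ (by simp) hn.ne')
    _ ≤ ε := by rw [inv_eq_one_div, Nat.cast_add_one]; exact hNε.le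
end

section
/- Let g_t = diag(e^{nt}, e^{-t}, …, e^{-t}) ∈ SL(n+1, ℝ) and for x ∈ ℝⁿ let Λ_x be the lattice {(p + x·q, q) : p ∈ ℤ, q ∈ ℤⁿ} ⊂ ℝ^{n+1}, and let δ(Λ) denote the length (supremum norm) of the shortest nonzero vector of a lattice Λ. Then x is very well approximable if and only if there exist γ > 0 and infinitely many t ∈ ℤ₊ such that δ(g_t Λ_x) ≤ e^{-γ t}. -/
open scoped BigOperators

/-- The lattice `Λ_x = {(p + x·q, q) : p ∈ ℤ, q ∈ ℤⁿ} ⊂ ℝ^{n+1}`. -/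
def Lambda (n : ℕ) (x : Fin n → ℝ) : Set (Fin (n + 1) → ℝ) :=
  {v | ∃ (p : ℤ) (q : Fin n → ℤ),
    v = Fin.cons ((p : ℝ) + ∑ i, x i * (q i : ℝ)) (fun i => (q i : ℝ))}

/-- The action of `g_t = diag(e^{nt}, e^{-t}, …, e^{-t})` on `ℝ^{n+1}`. -/
noncomputable def gAct (n : ℕ) (t : ℕ) (v : Fin (n + 1) → ℝ) : Fin (n + 1) → ℝ :=
  Fin.cons (Real.exp ((n : ℝ) * t) * v 0) (fun i => Real.exp (-(t : ℝ)) * v i.succ)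

/-- The length (supremum norm) of the shortest nonzero vector of a lattice. -/
noncomputable def latDelta (n : ℕ) (Λ : Set (Fin (n + 1) → ℝ)) : ℝ :=
  sInf {r : ℝ | ∃ v ∈ Λ, v ≠ 0 ∧ ‖v‖ = r}

lemma norm_int_vec_ge_one {n : ℕ} {q : Fin n → ℤ} (hq : q ≠ 0) :
    1 ≤ ‖(fun i => (q i : ℝ) : Fin n → ℝ)‖ := by
  obtain ⟨j, hj⟩ := Function.ne_iff.mp hq
  calc (1:ℝ) ≤ ‖((q j : ℝ))‖ := by
        rw [Real.norm_eq_abs]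
        exact_mod_cast Int.one_le_abs hj
    _ ≤ _ := norm_le_pi_norm (fun i => (q i:ℝ)) j

lemma delta_le {n : ℕ} (x : Fin n → ℝ) (t : ℕ) (p : ℤ) (q : Fin n → ℤ) (hq : q ≠ 0) (r : ℝ)
    (h1 : Real.exp ((n:ℝ) * t) * |(p:ℝ) + ∑ i, x i * (q i : ℝ)| ≤ r)
    (h2 : ∀ i, Real.exp (-(t:ℝ)) * |(q i : ℝ)| ≤ r) :
    latDelta n (gAct n t '' Lambda n x) ≤ r := by
  set v : Fin (n+1) → ℝ := Fin.cons ((p:ℝ) + ∑ i, x i * (q i:ℝ)) (fun i => (q i:ℝ)) with hv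
  set w := gAct n t v with hwdef
  have hw0 : w 0 = Real.exp ((n:ℝ)*t) * ((p:ℝ) + ∑ i, x i * (q i:ℝ)) := by
    simp [hwdef, gAct, hv]
  have hws : ∀ i : Fin n, w i.succ = Real.exp (-(t:ℝ)) * (q i:ℝ) := by
    intro i; simp [hwdef, gAct, hv]
  have hr0 : 0 ≤ r := le_trans (by positivity) h1
  have hwmem : w ∈ gAct n t '' Lambda n x := ⟨v, ⟨p, q, rfl⟩, rfl⟩
  obtain ⟨j, hj⟩ := Function.ne_iff.mp hq
  have hwne : w ≠ 0 := by
    intro h0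
    have h' : Real.exp (-(t:ℝ)) * (q j:ℝ) = 0 := by rw [← hws j, h0]; simp
    rcases mul_eq_zero.mp h' with h | h
    · exact Real.exp_ne_zero _ h
    · exact hj (by exact_mod_cast h)
  have hnorm : ‖w‖ ≤ r := by
    rw [pi_norm_le_iff_of_nonneg hr0]
    intro i
    refine Fin.cases ?_ ?_ i
    · rw [hw0, Real.norm_eq_abs, abs_mul, abs_of_pos (Real.exp_pos _)]; exact h1
    · intro j'
      rw [hws j', Real.norm_eq_abs, abs_mul, abs_of_pos (Real.exp_pos _)]; exact h2 j'
  have : latDelta n (gAct n t '' Lambda n x) ≤ ‖w‖ := by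
    unfold latDelta
    apply csInf_le
    · exact ⟨0, by rintro r' ⟨v', -, -, rfl⟩; exact norm_nonneg v'⟩
    · exact ⟨w, hwmem, hwne, rfl⟩
  linarith

lemma delta_extract {n : ℕ} (hn : 0 < n) (x : Fin n → ℝ) (t : ℕ) (ht : 0 < t) (b : ℝ)
    (hb0 : 0 < b) (hb1 : b < 1) (h : latDelta n (gAct n t '' Lambda n x) ≤ b) :
    ∃ (p : ℤ) (q : Fin n → ℤ), q ≠ 0 ∧
      Real.exp ((n:ℝ)*t) * |(p:ℝ) + ∑ i, x i * (q i:ℝ)| < 2*b ∧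
      ∀ i, Real.exp (-(t:ℝ)) * |(q i:ℝ)| < 2*b := by
  set S := {r : ℝ | ∃ v ∈ gAct n t '' Lambda n x, v ≠ 0 ∧ ‖v‖ = r} with hSdef
  have hent : (1:ℝ) ≤ (n:ℝ) * t := by
    have h1 : (1:ℝ) ≤ (n:ℝ) := by exact_mod_cast hn
    have h2 : (1:ℝ) ≤ (t:ℝ) := by exact_mod_cast ht
    nlinarith
  have hexp2 : (2:ℝ) ≤ Real.exp ((n:ℝ)*t) := by
    have := Real.add_one_le_exp (1:ℝ)
    have h2 := Real.exp_le_exp.mpr hent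
    linarith
  have hSne : S.Nonempty := by
    refine ⟨‖gAct n t (Fin.cons (((1:ℤ):ℝ) + ∑ i, x i * (((0:Fin n → ℤ)) i : ℝ))
        (fun i => (((0:Fin n → ℤ)) i : ℝ)))‖, _, ⟨_, ⟨1, 0, rfl⟩, rfl⟩, ?_, rfl⟩
    intro h0
    have h' := congrFun h0 0
    simp [gAct] at h'
  have hlt : sInf S < 2*b := lt_of_le_of_lt h (by linarith)
  obtain ⟨r, hrS, hrlt⟩ := exists_lt_of_csInf_lt hSne hlt
  obtain ⟨w, hwmem, hwne, rfl⟩ := hrS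
  obtain ⟨v, ⟨p, q, rfl⟩, rfl⟩ := hwmem
  have hw0 : gAct n t (Fin.cons ((p:ℝ) + ∑ i, x i * (q i:ℝ)) (fun i => (q i:ℝ))) 0
      = Real.exp ((n:ℝ)*t) * ((p:ℝ) + ∑ i, x i * (q i:ℝ)) := by simp [gAct]
  have hws : ∀ i : Fin n, gAct n t (Fin.cons ((p:ℝ) + ∑ i, x i * (q i:ℝ)) (fun i => (q i:ℝ))) i.succ
      = Real.exp (-(t:ℝ)) * (q i:ℝ) := by intro i; simp [gAct]
  have h1 : Real.exp ((n:ℝ)*t) * |(p:ℝ) + ∑ i, x i * (q i:ℝ)| < 2*b := by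
    have := norm_le_pi_norm (gAct n t (Fin.cons ((p:ℝ) + ∑ i, x i * (q i:ℝ)) (fun i => (q i:ℝ)))) 0
    rw [hw0, Real.norm_eq_abs, abs_mul, abs_of_pos (Real.exp_pos _)] at this
    linarith
  have h2 : ∀ i, Real.exp (-(t:ℝ)) * |(q i:ℝ)| < 2*b := by
    intro i
    have := norm_le_pi_norm (gAct n t (Fin.cons ((p:ℝ) + ∑ i, x i * (q i:ℝ)) (fun i => (q i:ℝ)))) i.succ
    rw [hws i, Real.norm_eq_abs, abs_mul, abs_of_pos (Real.exp_pos _)] at this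
    linarith
  refine ⟨p, q, ?_, h1, h2⟩
  intro hq0
  subst hq0
  have hsum : ∑ i, x i * ((0:Fin n → ℤ) i : ℝ) = 0 := by simp
  have hp : p ≠ 0 := by
    intro hp0
    apply hwne
    funext i
    refine Fin.cases ?_ ?_ i
    · rw [hw0, hp0]; simp [hsum]
    · intro j; rw [hws j]; simp
  have hp1 : (1:ℝ) ≤ |(p:ℝ) + ∑ i, x i * ((0:Fin n → ℤ) i : ℝ)| := by
    rw [hsum, add_zero]
    exact_mod_cast Int.one_le_abs hp
  nlinarith [h1, hexp2, hb1]

lemma forward (n : ℕ) (hn : 0 < n) (x : Fin n → ℝ) (ε : ℝ) (hε : 0 < ε)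
    (hS : {pq : ℤ × (Fin n → ℤ) | pq.2 ≠ 0 ∧
        |(pq.1 : ℝ) + ∑ i, x i * (pq.2 i : ℝ)| <
          ‖(fun i => (pq.2 i : ℝ) : Fin n → ℝ)‖ ^ (-(n : ℝ) * (1 + ε))}.Infinite) :
    ∃ γ : ℝ, 0 < γ ∧
      {t : ℕ | 0 < t ∧ latDelta n (gAct n t '' Lambda n x) ≤ Real.exp (-γ * t)}.Infinite := by
  have hn' : (0:ℝ) < n := by exact_mod_cast hn
  set γ : ℝ := n*ε/(2*(1+n*(1+ε))) with hγdef
  have hden : (0:ℝ) < 2*(1+n*(1+ε)) := by positivity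
  have hγpos : 0 < γ := div_pos (by positivity) hden
  have hγmul : γ * (2*(1+n*(1+ε))) = n*ε := by
    rw [hγdef]; field_simp
  clear_value γ
  have hγhalf : γ ≤ 1/2 := by nlinarith [hγmul, mul_pos hn' hε, hγpos]
  have h1γ : 0 < 1 - γ := by linarith
  have hkey : (n:ℝ) + γ < n*(1+ε)*(1-γ) := by
    nlinarith [hγmul, mul_pos hn' hε, hγpos, hγhalf]
  set c : ℝ := n*(1+ε)*(1-γ) - ((n:ℝ)+γ) with hcdef
  clear_value c
  have hc : 0 < c := by rw [hcdef]; linarith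
  -- unbounded q-norm
  have hub : ∀ B : ℝ, ∃ pq : ℤ × (Fin n → ℤ),
      (pq.2 ≠ 0 ∧ |(pq.1 : ℝ) + ∑ i, x i * (pq.2 i : ℝ)| <
          ‖(fun i => (pq.2 i : ℝ) : Fin n → ℝ)‖ ^ (-(n : ℝ) * (1 + ε)))
      ∧ B < ‖(fun i => (pq.2 i:ℝ) : Fin n → ℝ)‖ := by
    intro B
    by_contra hcon
    push_neg at hcon
    apply hS
    have hsub : {pq : ℤ × (Fin n → ℤ) | pq.2 ≠ 0 ∧
        |(pq.1 : ℝ) + ∑ i, x i * (pq.2 i : ℝ)| <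
          ‖(fun i => (pq.2 i : ℝ) : Fin n → ℝ)‖ ^ (-(n : ℝ) * (1 + ε))} ⊆
        (Set.Icc (-(⌈1 + (∑ i, |x i|) * B⌉)) ⌈1 + (∑ i, |x i|) * B⌉ : Set ℤ) ×ˢ
        (Set.pi Set.univ fun _ : Fin n => (Set.Icc (-(⌈B⌉)) ⌈B⌉ : Set ℤ)) := by
      rintro ⟨p, q⟩ ⟨hq, hlt⟩
      have hqB : ‖(fun i => (q i:ℝ) : Fin n → ℝ)‖ ≤ B := hcon (p, q) ⟨hq, hlt⟩
      have hqi : ∀ i, |(q i : ℝ)| ≤ B := fun i =>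
        le_trans (by simpa using norm_le_pi_norm (fun i => (q i:ℝ)) i) hqB
      have h1q : 1 ≤ ‖(fun i => (q i:ℝ) : Fin n → ℝ)‖ := norm_int_vec_ge_one hq
      have hrle : ‖(fun i => (q i:ℝ) : Fin n → ℝ)‖ ^ (-(n:ℝ)*(1+ε)) ≤ 1 :=
        Real.rpow_le_one_of_one_le_of_nonpos h1q (by nlinarith)
      have hsumb : |∑ i, x i * (q i:ℝ)| ≤ (∑ i, |x i|) * B := by
        calc |∑ i, x i * (q i:ℝ)| ≤ ∑ i, |x i * (q i:ℝ)| := Finset.abs_sum_le_sum_abs _ _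
          _ = ∑ i, |x i| * |(q i:ℝ)| := by simp [abs_mul]
          _ ≤ ∑ i, |x i| * B := Finset.sum_le_sum fun i _ =>
              mul_le_mul_of_nonneg_left (hqi i) (abs_nonneg _)
          _ = (∑ i, |x i|) * B := by rw [Finset.sum_mul]
      have hpb : |(p:ℝ)| ≤ 1 + (∑ i, |x i|) * B := by
        have htri := abs_add_le ((p:ℝ) + ∑ i, x i * (q i:ℝ)) (-(∑ i, x i * (q i:ℝ)))
        rw [add_neg_cancel_right, abs_neg] at htri
        linarith
      constructor
      · rw [Set.mem_Icc, ← abs_le]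
        have h' : (|p| : ℝ) ≤ (⌈1 + (∑ i, |x i|) * B⌉ : ℤ) := by
          push_cast
          exact le_trans hpb (Int.le_ceil _)
        exact_mod_cast h'
      · intro i _
        rw [Set.mem_Icc, ← abs_le]
        have h' : (|q i| : ℝ) ≤ ((⌈B⌉ : ℤ) : ℝ) := by
          push_cast
          exact le_trans (hqi i) (Int.le_ceil _)
        exact_mod_cast h'
    exact Set.Finite.subset ((Set.finite_Icc _ _).prod
      (Set.Finite.pi fun _ => Set.finite_Icc _ _)) hsub
  refine ⟨γ, hγpos, Set.infinite_of_forall_exists_gt ?_⟩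
  intro N
  obtain ⟨⟨p, q⟩, ⟨hq, hlt⟩, hqB⟩ := hub (Real.exp (max ((N:ℝ)+1) (((n:ℝ)+γ+1)*(1+c)/c)))
  have hqpos : (0:ℝ) < ‖(fun i => (q i:ℝ) : Fin n → ℝ)‖ :=
    lt_of_lt_of_le zero_lt_one (norm_int_vec_ge_one hq)
  set L := Real.log ‖(fun i => (q i:ℝ) : Fin n → ℝ)‖ with hLdef
  clear_value L
  have hL : max ((N:ℝ)+1) (((n:ℝ)+γ+1)*(1+c)/c) < L := by
    rw [hLdef]
    exact (Real.lt_log_iff_exp_lt hqpos).mpr hqB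
  have hLN : (N:ℝ)+1 ≤ L := le_of_lt (lt_of_le_of_lt (le_max_left _ _) hL)
  have hLc : ((n:ℝ)+γ+1)*(1+c) < L*c := by
    have h' := lt_of_le_of_lt (le_max_right _ _) hL
    rw [div_lt_iff₀ hc] at h'
    linarith
  have hL0 : 0 < L := by
    have : (0:ℝ) ≤ (N:ℝ) := Nat.cast_nonneg N
    linarith
  set t : ℕ := ⌈L/(1-γ)⌉₊ with htdef
  have htL : L/(1-γ) ≤ (t:ℝ) := by rw [htdef]; exact Nat.le_ceil _
  have htceil : (t:ℝ) < L/(1-γ) + 1 := by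
    rw [htdef]; exact Nat.ceil_lt_add_one (by positivity)
  have htpos0 : 0 < t := by rw [htdef]; exact Nat.ceil_pos.mpr (by positivity)
  clear_value t
  have ht2 : L ≤ (t:ℝ)*(1-γ) := by
    rw [div_le_iff₀ h1γ] at htL; linarith
  have htup : ((t:ℝ) - 1)*(1-γ) ≤ L := by
    have h'' : (t:ℝ) - 1 < L/(1-γ) := by linarith [htceil]
    have := (lt_div_iff₀ h1γ).mp h''
    linarith
  have htpos : 0 < t := htpos0
  have htgeL : L ≤ (t:ℝ) := by
    nlinarith [ht2, mul_nonneg (Nat.cast_nonneg t : (0:ℝ) ≤ (t:ℝ)) hγpos.le]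
  have htN : N < t := by
    have h' : (N:ℝ) < (t:ℝ) := by linarith
    exact_mod_cast h'
  refine ⟨t, ⟨htpos, ?_⟩, htN⟩
  have hqL : ‖(fun i => (q i:ℝ) : Fin n → ℝ)‖ = Real.exp L := by
    rw [hLdef]; exact (Real.exp_log hqpos).symm
  apply delta_le x t p q hq
  · rw [Real.rpow_def_of_pos hqpos, ← hLdef] at hlt
    have hexps : (n:ℝ)*t + L * (-(n:ℝ)*(1+ε)) ≤ -γ*t := by
      have e1 : (n:ℝ)*(1+ε)*(((t:ℝ)-1)*(1-γ)) ≤ (n:ℝ)*(1+ε)*L :=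
        mul_le_mul_of_nonneg_left htup (by positivity)
      have e2 : c*L ≤ c*(t:ℝ) := mul_le_mul_of_nonneg_left htgeL hc.le
      have e4 : (0:ℝ) ≤ c*((n:ℝ)+γ) := mul_nonneg hc.le (by positivity)
      have e5 : (c + (n:ℝ) + γ)*((t:ℝ)-1) ≤ (n:ℝ)*(1+ε)*L := by
        calc (c + (n:ℝ) + γ)*((t:ℝ)-1) = (n:ℝ)*(1+ε)*(((t:ℝ)-1)*(1-γ)) := by
              rw [hcdef]; ring
          _ ≤ (n:ℝ)*(1+ε)*L := e1
      have e6 : c + ((n:ℝ)+γ) ≤ c*(t:ℝ) := by nlinarith only [e2, hLc, e4, hc]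
      have e7 : ((n:ℝ)+γ)*(t:ℝ) ≤ (n:ℝ)*(1+ε)*L := by nlinarith only [e5, e6]
      nlinarith only [e7]
    calc Real.exp ((n:ℝ)*t) * |(p:ℝ) + ∑ i, x i * (q i:ℝ)|
        ≤ Real.exp ((n:ℝ)*t) * Real.exp (L * (-(n:ℝ)*(1+ε))) := by
          exact mul_le_mul_of_nonneg_left (le_of_lt hlt) (Real.exp_pos _).le
      _ = Real.exp ((n:ℝ)*t + L * (-(n:ℝ)*(1+ε))) := (Real.exp_add _ _).symm
      _ ≤ Real.exp (-γ*t) := Real.exp_le_exp.mpr hexps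
  · intro i
    have h1 : |(q i:ℝ)| ≤ Real.exp L := by
      rw [← hqL]
      simpa using norm_le_pi_norm (fun i => (q i:ℝ)) i
    calc Real.exp (-(t:ℝ)) * |(q i:ℝ)| ≤ Real.exp (-(t:ℝ)) * Real.exp L :=
          mul_le_mul_of_nonneg_left h1 (Real.exp_pos _).le
      _ = Real.exp (L - t) := by rw [← Real.exp_add]; ring_nf
      _ ≤ Real.exp (-γ*t) := Real.exp_le_exp.mpr (by nlinarith only [ht2])

lemma backward (n : ℕ) (hn : 0 < n) (x : Fin n → ℝ) (γ0 : ℝ) (hγ0 : 0 < γ0)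
    (hT : {t : ℕ | 0 < t ∧ latDelta n (gAct n t '' Lambda n x) ≤ Real.exp (-γ0 * t)}.Infinite) :
    ∃ ε : ℝ, 0 < ε ∧
      {pq : ℤ × (Fin n → ℤ) | pq.2 ≠ 0 ∧
        |(pq.1 : ℝ) + ∑ i, x i * (pq.2 i : ℝ)| <
          ‖(fun i => (pq.2 i : ℝ) : Fin n → ℝ)‖ ^ (-(n : ℝ) * (1 + ε))}.Infinite := by
  have hn' : (0:ℝ) < n := by exact_mod_cast hn
  have hlog2 : (0:ℝ) ≤ Real.log 2 := Real.log_nonneg one_le_two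
  set γ := min γ0 (1/2) with hγdef
  have hγpos : 0 < γ := lt_min hγ0 (by norm_num)
  have hγhalf : γ ≤ 1/2 := min_le_right _ _
  have hγle : γ ≤ γ0 := min_le_left _ _
  clear_value γ
  have hT' : {t : ℕ | 0 < t ∧ latDelta n (gAct n t '' Lambda n x) ≤ Real.exp (-γ * t)}.Infinite := by
    apply hT.mono
    rintro t ⟨ht, hd⟩
    refine ⟨ht, le_trans hd (Real.exp_le_exp.mpr ?_)⟩
    have ht0 : (0:ℝ) ≤ (t:ℝ) := Nat.cast_nonneg t
    nlinarith only [hγle, ht0]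
  set ε := γ/(2*n) with hεdef
  have hεpos : 0 < ε := div_pos hγpos (by positivity)
  have hεn : (n:ℝ)*ε*2 = γ := by rw [hεdef]; field_simp
  clear_value ε
  refine ⟨ε, hεpos, ?_⟩
  set T₀ : ℝ := 2*(1+n*(1+ε))*Real.log 2/γ + 1 with hT₀def
  have hT₀pos : 0 ≤ T₀ := by
    rw [hT₀def]
    have : (0:ℝ) ≤ 2*(1+n*(1+ε))*Real.log 2/γ := by
      apply div_nonneg _ hγpos.le
      positivity
    linarith
  clear_value T₀
  have hsolve : ∀ t : ℕ, 0 < t → latDelta n (gAct n t '' Lambda n x) ≤ Real.exp (-γ * t) →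
      T₀ ≤ (t:ℝ) →
      ∃ p : ℤ, ∃ q : Fin n → ℤ, q ≠ 0 ∧
        |(p:ℝ) + ∑ i, x i * (q i:ℝ)| <
          ‖(fun i => (q i:ℝ) : Fin n → ℝ)‖ ^ (-(n:ℝ)*(1+ε)) ∧
        |(p:ℝ) + ∑ i, x i * (q i:ℝ)| < 2*Real.exp (-((n:ℝ)+γ)*t) := by
    intro t ht hd htT
    have ht1 : (1:ℝ) ≤ (t:ℝ) := by exact_mod_cast ht
    have hb1 : Real.exp (-γ*t) < 1 := by
      have hlt0 : -γ*(t:ℝ) < 0 := by nlinarith only [hγpos, ht1]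
      have := Real.exp_lt_exp.mpr hlt0
      rwa [Real.exp_zero] at this
    obtain ⟨p, q, hq, h1, h2⟩ := delta_extract hn x t ht (Real.exp (-γ*t))
      (Real.exp_pos _) hb1 hd
    have hval : |(p:ℝ) + ∑ i, x i * (q i:ℝ)| < 2*Real.exp (-((n:ℝ)+γ)*t) := by
      have hE : Real.exp ((n:ℝ)*t) * (2*Real.exp (-((n:ℝ)+γ)*t)) = 2*Real.exp (-γ*t) := by
        calc Real.exp ((n:ℝ)*t) * (2*Real.exp (-((n:ℝ)+γ)*t))
            = 2*(Real.exp ((n:ℝ)*t + -((n:ℝ)+γ)*t)) := by rw [Real.exp_add]; ring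
          _ = 2*Real.exp (-γ*t) := by ring_nf
      rw [← hE] at h1
      exact lt_of_mul_lt_mul_left h1 (Real.exp_pos _).le
    refine ⟨p, q, hq, ?_, hval⟩
    have hqle : ‖(fun i => (q i:ℝ) : Fin n → ℝ)‖ ≤ 2*Real.exp ((1-γ)*t) := by
      rw [pi_norm_le_iff_of_nonneg (by positivity)]
      intro i
      have h2i := h2 i
      rw [Real.norm_eq_abs]
      have hE2 : Real.exp (-(t:ℝ)) * (2*Real.exp ((1-γ)*t)) = 2*Real.exp (-γ*t) := by
        calc Real.exp (-(t:ℝ)) * (2*Real.exp ((1-γ)*t))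
            = 2*(Real.exp (-(t:ℝ) + (1-γ)*t)) := by rw [Real.exp_add]; ring
          _ = 2*Real.exp (-γ*t) := by ring_nf
      rw [← hE2] at h2i
      exact (lt_of_mul_lt_mul_left h2i (Real.exp_pos _).le).le
    have hqpos : (0:ℝ) < ‖(fun i => (q i:ℝ) : Fin n → ℝ)‖ :=
      lt_of_lt_of_le one_pos (norm_int_vec_ge_one hq)
    have hA : (2*Real.exp ((1-γ)*t)) ^ (-(n:ℝ)*(1+ε)) ≤
        ‖(fun i => (q i:ℝ) : Fin n → ℝ)‖ ^ (-(n:ℝ)*(1+ε)) :=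
      Real.rpow_le_rpow_of_nonpos hqpos hqle (by nlinarith only [hn', hεpos])
    have hApos : (0:ℝ) < 2*Real.exp ((1-γ)*t) := by positivity
    have hB : 2*Real.exp (-((n:ℝ)+γ)*t) ≤ (2*Real.exp ((1-γ)*t)) ^ (-(n:ℝ)*(1+ε)) := by
      rw [Real.rpow_def_of_pos hApos, Real.log_mul two_ne_zero (Real.exp_ne_zero _),
        Real.log_exp]
      have hcoef : γ/2 ≤ (n:ℝ)+γ - n*(1+ε)*(1-γ) := by
        nlinarith only [hεn, mul_nonneg (mul_nonneg hn'.le hγpos.le) hεpos.le,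
          mul_nonneg hn'.le hγpos.le, hγpos, hn', hεpos]
      have hd2 : 2*(1+(n:ℝ)*(1+ε))*Real.log 2 ≤ γ*((t:ℝ)-1) := by
        have h' : 2*(1+(n:ℝ)*(1+ε))*Real.log 2/γ ≤ (t:ℝ)-1 := by
          rw [hT₀def] at htT; linarith
        rw [div_le_iff₀ hγpos] at h'
        linarith [mul_comm γ ((t:ℝ)-1)]
      have hexps : Real.log 2 + -((n:ℝ)+γ)*t ≤ (Real.log 2 + (1-γ)*t) * (-(n:ℝ)*(1+ε)) := by
        nlinarith only [mul_le_mul_of_nonneg_right hcoef (le_trans zero_le_one ht1),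
          hd2, hγpos, ht1, hlog2, mul_nonneg (mul_nonneg hn'.le hεpos.le) hlog2,
          mul_nonneg hn'.le hlog2]
      calc 2*Real.exp (-((n:ℝ)+γ)*t) = Real.exp (Real.log 2 + -((n:ℝ)+γ)*t) := by
            rw [Real.exp_add, Real.exp_log two_pos]
        _ ≤ Real.exp ((Real.log 2 + (1-γ)*t) * (-(n:ℝ)*(1+ε))) := Real.exp_le_exp.mpr hexps
    exact lt_of_lt_of_le hval (le_trans hB hA)
  by_cases hexact : ∃ q : Fin n → ℤ, q ≠ 0 ∧ ∃ p : ℤ, (p:ℝ) + ∑ i, x i * (q i:ℝ) = 0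
  · obtain ⟨q, hq, p, hpq⟩ := hexact
    obtain ⟨j, hj⟩ := Function.ne_iff.mp hq
    apply Set.infinite_of_injective_forall_mem
      (f := fun k : ℕ => ((((k:ℤ)+1)*p, fun i => ((k:ℤ)+1)*q i) : ℤ × (Fin n → ℤ)))
    · intro a b hab
      have h2 := congrFun (congrArg Prod.snd hab) j
      simp only at h2
      have h3 := mul_right_cancel₀ hj h2
      have : (a:ℤ) = (b:ℤ) := by linarith [h3]
      exact_mod_cast this
    · intro k
      have hqk : (fun i => ((k:ℤ)+1)*q i) ≠ (0 : Fin n → ℤ) := by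
        intro h0
        have := congrFun h0 j
        simp only [Pi.zero_apply, mul_eq_zero] at this
        rcases this with h | h
        · omega
        · exact hj h
      refine ⟨hqk, ?_⟩
      have hval0 : (((((k:ℤ)+1)*p : ℤ)):ℝ) + ∑ i, x i * ((((k:ℤ)+1)*q i : ℤ):ℝ) = 0 := by
        push_cast
        rw [show (∑ i, x i * (((k:ℝ)+1) * (q i:ℝ))) = ((k:ℝ)+1) * ∑ i, x i * (q i:ℝ) by
          rw [Finset.mul_sum]; exact Finset.sum_congr rfl fun i _ => by ring]
        linear_combination ((k:ℝ)+1) * hpq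
      simp only [Set.mem_setOf_eq]
      rw [hval0, abs_zero]
      apply Real.rpow_pos_of_pos
      exact lt_of_lt_of_le one_pos (norm_int_vec_ge_one hqk)
  · push_neg at hexact
    by_contra hfin
    rw [Set.not_infinite] at hfin
    obtain ⟨t₁, ht₁T, ht₁gt⟩ := hT'.exists_gt ⌈T₀⌉₊
    have ht₁T₀ : T₀ ≤ (t₁:ℝ) := by
      refine le_trans (Nat.le_ceil T₀) ?_
      exact_mod_cast ht₁gt.le
    obtain ⟨p₁, q₁, hq₁, hs₁, _⟩ := hsolve t₁ ht₁T.1 ht₁T.2 ht₁T₀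
    set V := (fun pq : ℤ × (Fin n → ℤ) => |(pq.1:ℝ) + ∑ i, x i * (pq.2 i:ℝ)|) ''
      {pq : ℤ × (Fin n → ℤ) | pq.2 ≠ 0 ∧
        |(pq.1 : ℝ) + ∑ i, x i * (pq.2 i : ℝ)| <
          ‖(fun i => (pq.2 i : ℝ) : Fin n → ℝ)‖ ^ (-(n : ℝ) * (1 + ε))} with hVdef
    have hVfin : V.Finite := hfin.image _
    have hVne : V.Nonempty := ⟨_, ⟨(p₁,q₁), ⟨hq₁, hs₁⟩, rfl⟩⟩
    have hmV := hVne.csInf_mem hVfin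
    set m := sInf V with hmdef
    have hmpos : 0 < m := by
      obtain ⟨⟨p', q'⟩, hmemS, hv⟩ := hmV
      rw [← hv]
      exact abs_pos.mpr (hexact q' hmemS.1 p')
    obtain ⟨t₂, ht₂T, ht₂gt⟩ := hT'.exists_gt ⌈max T₀ ((Real.log (2/m))/((n:ℝ)+γ))⌉₊
    have ht₂big : max T₀ ((Real.log (2/m))/((n:ℝ)+γ)) ≤ (t₂:ℝ) := by
      refine le_trans (Nat.le_ceil _) ?_
      exact_mod_cast ht₂gt.le
    obtain ⟨p₂, q₂, hq₂, hs₂, hsmall⟩ :=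
      hsolve t₂ ht₂T.1 ht₂T.2 (le_trans (le_max_left _ _) ht₂big)
    have hmle : m ≤ |(p₂:ℝ) + ∑ i, x i * (q₂ i:ℝ)| :=
      csInf_le hVfin.bddBelow ⟨(p₂,q₂), ⟨hq₂, hs₂⟩, rfl⟩
    have h2m : 2*Real.exp (-((n:ℝ)+γ)*t₂) < m := by
      have hlt' : (Real.log (2/m))/((n:ℝ)+γ) < (t₂:ℝ) := by
        refine lt_of_le_of_lt (le_trans (le_max_right T₀ _) (Nat.le_ceil _)) ?_
        exact_mod_cast ht₂gt
      have hnγ : (0:ℝ) < (n:ℝ)+γ := by linarith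
      rw [div_lt_iff₀ hnγ] at hlt'
      have hlogeq : Real.log (2/m) = Real.log 2 - Real.log m :=
        Real.log_div two_ne_zero hmpos.ne'
      have hexplt : Real.exp (-((n:ℝ)+γ)*t₂) < Real.exp (Real.log (m/2)) := by
        apply Real.exp_lt_exp.mpr
        rw [Real.log_div hmpos.ne' two_ne_zero]
        nlinarith only [hlt', hlogeq, hnγ]
      rw [Real.exp_log (by positivity : (0:ℝ) < m/2)] at hexplt
      linarith
    linarith [hsmall, hmle, h2m]

/-- Dani–Kleinbock–Margulis correspondence: `x` is very well approximable iff there exist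
`γ > 0` and infinitely many `t ∈ ℤ₊` with `δ(g_t Λ_x) ≤ e^{-γt}`. -/
theorem stmt10 (n : ℕ) (hn : 0 < n) (x : Fin n → ℝ) :
    (∃ ε : ℝ, 0 < ε ∧
      {pq : ℤ × (Fin n → ℤ) | pq.2 ≠ 0 ∧
        |(pq.1 : ℝ) + ∑ i, x i * (pq.2 i : ℝ)| <
          ‖(fun i => (pq.2 i : ℝ) : Fin n → ℝ)‖ ^ (-(n : ℝ) * (1 + ε))}.Infinite)
    ↔ ∃ γ : ℝ, 0 < γ ∧
      {t : ℕ | 0 < t ∧ latDelta n (gAct n t '' Lambda n x) ≤ Real.exp (-γ * t)}.Infinite := by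
  constructor
  · rintro ⟨ε, hε, hS⟩
    exact forward n hn x ε hε hS
  · rintro ⟨γ, hγ, hT⟩
    exact backward n hn x γ hγ hT
end

section
/- Let ψ : ℕ → ℝ≥0 be non-increasing with ∑_{k=1}^∞ (log k)^{n-1} ψ(k) < ∞. Then ∑_{q ∈ ℤⁿ, q ≠ 0} ψ(Π₊(q)) < ∞, where Π₊(q) = ∏_{i=1}^n max(|q_i|, 1) for q = (q₁,…,qₙ). -/
open scoped BigOperators

open ENNReal

namespace Stmt11Aux

/-- sign-coded injection of `ℤ` into `ℕ × Fin 3` remembering `max |z| 1`. -/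
def jmap (z : ℤ) : ℕ × Fin 3 :=
  (max z.natAbs 1, if 0 < z then 0 else if z = 0 then 1 else 2)

lemma jmap_inj : Function.Injective jmap := by
  intro a b h
  have h1 : max a.natAbs 1 = max b.natAbs 1 := congrArg Prod.fst h
  have h2 : (if 0 < a then (0 : Fin 3) else if a = 0 then 1 else 2)
      = (if 0 < b then (0 : Fin 3) else if b = 0 then 1 else 2) := congrArg Prod.snd h
  split_ifs at h2 <;> first
    | omega
    | exact absurd h2 (by decide)

/-- `Π₊` for integer vectors. -/
def Pp {m : ℕ} (q : Fin m → ℤ) : ℕ := ∏ i, max (q i).natAbs 1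

lemma one_le_Pp {m : ℕ} (q : Fin m → ℤ) : 1 ≤ Pp q :=
  Finset.one_le_prod' fun i _ => le_max_right _ _

/-- The counting tsum. -/
noncomputable def CNT (m N : ℕ) : ℝ≥0∞ :=
  ∑' q : Fin m → ℤ, if Pp q ≤ N then 1 else 0

lemma CNT_N_zero (m : ℕ) : CNT m 0 = 0 := by
  unfold CNT
  convert tsum_zero with q
  rw [if_neg]
  have := one_le_Pp q
  omega

lemma CNT_m_zero (M : ℕ) : CNT 0 M = if 1 ≤ M then 1 else 0 := by
  unfold CNT
  rw [tsum_eq_single (fun i => i.elim0)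
    (fun b hb => absurd (Subsingleton.elim b _) hb)]
  simp [Pp]

lemma ZSUM (h : ℕ → ℝ≥0∞) : ∑' z : ℤ, h (max z.natAbs 1) ≤ 3 * ∑' t : ℕ, h t := by
  have h1 : ∑' z : ℤ, h (max z.natAbs 1)
      = ∑' z : ℤ, (fun p : ℕ × Fin 3 => h p.1) (jmap z) := rfl
  rw [h1]
  calc ∑' z : ℤ, (fun p : ℕ × Fin 3 => h p.1) (jmap z)
      ≤ ∑' p : ℕ × Fin 3, h p.1 := ENNReal.tsum_comp_le_tsum_of_injective jmap_inj _
    _ = ∑' t : ℕ, ∑' _s : Fin 3, h t := ENNReal.tsum_prod'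
    _ = ∑' t : ℕ, 3 * h t := by
        refine tsum_congr fun t => ?_
        rw [tsum_fintype, Finset.sum_const, Finset.card_univ, Fintype.card_fin,
          nsmul_eq_mul]
        norm_num
    _ = 3 * ∑' t, h t := ENNReal.tsum_mul_left

lemma CNT_succ (m N : ℕ) :
    CNT (m + 1) N = ∑' z : ℤ, CNT m (N / max z.natAbs 1) := by
  unfold CNT
  rw [← (Fin.consEquiv fun _ => ℤ).tsum_eq, ENNReal.tsum_prod']
  refine tsum_congr fun z => tsum_congr fun q => ?_
  have hv : 0 < max z.natAbs 1 := by omega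
  have hP : Pp ((Fin.consEquiv fun _ => ℤ) (z, q)) = max z.natAbs 1 * Pp q := by
    simp [Pp, Fin.consEquiv, Fin.prod_univ_succ]
  rw [hP]
  refine if_congr ?_ rfl rfl
  rw [Nat.le_div_iff_mul_le hv, mul_comm]

lemma log_nat_nonneg (K : ℕ) : 0 ≤ Real.log K := Real.log_natCast_nonneg K

lemma log_nat_mono {M K : ℕ} (h : M ≤ K) : Real.log M ≤ Real.log K := by
  rcases Nat.eq_zero_or_pos M with rfl | hM
  · simpa using log_nat_nonneg K
  · exact Real.log_le_log (by exact_mod_cast hM) (by exact_mod_cast h)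

/-- The log weight. -/
noncomputable def B (K : ℕ) : ℝ≥0∞ := ENNReal.ofReal (1 + Real.log K)

lemma B_mono {M K : ℕ} (h : M ≤ K) : B M ≤ B K :=
  ENNReal.ofReal_le_ofReal (by linarith [log_nat_mono h])

lemma B_ne_top (K : ℕ) : B K ≠ ⊤ := ENNReal.ofReal_ne_top

lemma harm_tail (K : ℕ) : ∑ t ∈ Finset.Icc 2 K, ((t : ℝ))⁻¹ ≤ Real.log K := by
  rcases Nat.lt_or_ge K 1 with hK | hK
  · interval_cases K
    simp
  · have h1 : (harmonic K : ℝ) = ∑ t ∈ Finset.Icc 1 K, ((t : ℝ))⁻¹ := by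
      rw [harmonic_eq_sum_Icc]
      push_cast
      rfl
    have h2 : Finset.Icc 1 K = insert 1 (Finset.Icc 2 K) := by
      ext x
      simp only [Finset.mem_Icc, Finset.mem_insert]
      omega
    have h3 : (1 : ℕ) ∉ Finset.Icc 2 K := by simp
    have h4 := harmonic_le_one_add_log K
    rw [h1, h2, Finset.sum_insert h3] at h4
    norm_num at h4
    linarith

lemma harm (K : ℕ) :
    ∑ t ∈ Finset.Icc 2 K, ((K / t : ℕ) : ℝ≥0∞) ≤ ENNReal.ofReal (K * Real.log K) := by
  have key : ∑ t ∈ Finset.Icc 2 K, ((K / t : ℕ) : ℝ) ≤ (K : ℝ) * Real.log K := by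
    calc ∑ t ∈ Finset.Icc 2 K, ((K / t : ℕ) : ℝ)
        ≤ ∑ t ∈ Finset.Icc 2 K, (K : ℝ) * ((t : ℝ))⁻¹ := by
          refine Finset.sum_le_sum fun t ht => ?_
          rw [← div_eq_mul_inv]
          exact Nat.cast_div_le
      _ = (K : ℝ) * ∑ t ∈ Finset.Icc 2 K, ((t : ℝ))⁻¹ := by rw [Finset.mul_sum]
      _ ≤ (K : ℝ) * Real.log K := by
          exact mul_le_mul_of_nonneg_left (harm_tail K) (Nat.cast_nonneg K)
  calc ∑ t ∈ Finset.Icc 2 K, ((K / t : ℕ) : ℝ≥0∞)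
      = ENNReal.ofReal (∑ t ∈ Finset.Icc 2 K, ((K / t : ℕ) : ℝ)) := by
        rw [ENNReal.ofReal_sum_of_nonneg (fun i _ => Nat.cast_nonneg _)]
        exact Finset.sum_congr rfl fun t _ => (ENNReal.ofReal_natCast _).symm
    _ ≤ _ := ENNReal.ofReal_le_ofReal key
lemma CNT_step (m K : ℕ) : CNT (m + 1) K ≤ 3 * ∑' t : ℕ, CNT m (K / t) := by
  rw [CNT_succ]
  exact ZSUM _

lemma CNT_div_zero {m K t : ℕ} (ht : t ∉ Finset.Icc 1 K) : CNT m (K / t) = 0 := by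
  simp only [Finset.mem_Icc, not_and_or, not_le] at ht
  have : K / t = 0 := by
    rcases ht with ht | ht
    · interval_cases t
      simp
    · exact Nat.div_eq_of_lt ht
  rw [this, CNT_N_zero]

lemma CNT_sum_form (m K : ℕ) :
    ∑' t : ℕ, CNT m (K / t) = ∑ t ∈ Finset.Icc 1 K, CNT m (K / t) :=
  tsum_eq_sum fun _ ht => CNT_div_zero ht

lemma one_le_B (K : ℕ) : 1 ≤ B K := by
  rw [show (1 : ℝ≥0∞) = ENNReal.ofReal 1 by simp]
  exact ENNReal.ofReal_le_ofReal (by linarith [log_nat_nonneg K])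

lemma K_mul_B (K : ℕ) :
    (K : ℝ≥0∞) + ENNReal.ofReal (K * Real.log K) = (K : ℝ≥0∞) * B K := by
  have h0 : (0:ℝ) ≤ (K:ℝ) * Real.log K := mul_nonneg (Nat.cast_nonneg K) (log_nat_nonneg K)
  rw [← ENNReal.ofReal_natCast K, ← ENNReal.ofReal_add (Nat.cast_nonneg K) h0,
    B, ← ENNReal.ofReal_mul (Nat.cast_nonneg K)]
  congr 1
  ring

lemma CNT_le : ∀ m K : ℕ, CNT (m + 1) K ≤ 9 ^ (m + 1) * K * B K ^ m := by
  intro m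
  induction m with
  | zero =>
    intro K
    calc CNT 1 K ≤ 3 * ∑' t : ℕ, CNT 0 (K / t) := CNT_step 0 K
      _ = 3 * ∑ t ∈ Finset.Icc 1 K, CNT 0 (K / t) := by rw [CNT_sum_form]
      _ = 3 * ∑ t ∈ Finset.Icc 1 K, 1 := by
          congr 1
          refine Finset.sum_congr rfl fun t ht => ?_
          simp only [Finset.mem_Icc] at ht
          rw [CNT_m_zero, if_pos]
          rw [Nat.one_le_div_iff (by omega)]
          exact ht.2
      _ = 3 * K := by
          rw [Finset.sum_const, Nat.card_Icc]
          simp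
      _ ≤ 9 ^ (0 + 1) * K * B K ^ 0 := by
          rw [pow_zero, mul_one, pow_one]
          exact _root_.mul_le_mul_left (by norm_num) _
  | succ m IH =>
    intro K
    rcases Nat.eq_zero_or_pos K with rfl | hK
    · rw [CNT_N_zero]
      exact zero_le
    have hIcc : Finset.Icc 1 K = insert 1 (Finset.Icc 2 K) := by
      ext x
      simp only [Finset.mem_Icc, Finset.mem_insert]
      omega
    have h1 : (1 : ℕ) ∉ Finset.Icc 2 K := by simp
    calc CNT (m + 2) K ≤ 3 * ∑' t : ℕ, CNT (m + 1) (K / t) := CNT_step (m + 1) K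
      _ = 3 * (CNT (m + 1) K + ∑ t ∈ Finset.Icc 2 K, CNT (m + 1) (K / t)) := by
          rw [CNT_sum_form, hIcc, Finset.sum_insert h1, Nat.div_one]
      _ ≤ 3 * (9 ^ (m + 1) * K * B K ^ m
            + ∑ t ∈ Finset.Icc 2 K, 9 ^ (m + 1) * B K ^ m * ((K / t : ℕ) : ℝ≥0∞)) := by
          refine _root_.mul_le_mul_right (add_le_add (IH K) (Finset.sum_le_sum fun t ht => ?_)) 3
          calc CNT (m + 1) (K / t) ≤ 9 ^ (m + 1) * (K / t : ℕ) * B (K / t) ^ m := IH _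
            _ ≤ 9 ^ (m + 1) * (K / t : ℕ) * B K ^ m :=
              _root_.mul_le_mul_right (pow_le_pow_left' (B_mono (Nat.div_le_self K t)) m) _
            _ = 9 ^ (m + 1) * B K ^ m * ((K / t : ℕ) : ℝ≥0∞) := by ring
      _ ≤ 3 * (9 ^ (m + 1) * K * B K ^ m
            + 9 ^ (m + 1) * B K ^ m * ENNReal.ofReal (K * Real.log K)) := by
          rw [← Finset.mul_sum]
          exact _root_.mul_le_mul_right (add_le_add_right (_root_.mul_le_mul_right (harm K) _) _) 3
      _ = 3 * 9 ^ (m + 1) * B K ^ m * ((K : ℝ≥0∞) + ENNReal.ofReal (K * Real.log K)) := by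
          ring
      _ = 3 * 9 ^ (m + 1) * B K ^ m * ((K : ℝ≥0∞) * B K) := by rw [K_mul_B K]
      _ = 3 * 9 ^ (m + 1) * K * B K ^ (m + 1) := by ring
      _ ≤ 9 ^ (m + 2) * K * B K ^ (m + 1) := by
          have h3 : (3 : ℝ≥0∞) * 9 ^ (m + 1) ≤ 9 ^ (m + 2) := by
            rw [pow_succ, mul_comm]
            exact _root_.mul_le_mul_right (show (3:ℝ≥0∞) ≤ 9 by norm_num) _
          exact _root_.mul_le_mul_left (_root_.mul_le_mul_left h3 _) _

lemma avg (Φ : ℕ → ℝ≥0∞) (hΦ : Antitone Φ) (P : ℕ) (hP : 1 ≤ P) :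
    Φ P ≤ ∑' k : ℕ, if P / 2 < k ∧ k ≤ P then (P : ℝ≥0∞)⁻¹ * 2 * Φ k else 0 := by
  have hPne : (P : ℝ≥0∞) ≠ 0 := by
    simp only [ne_eq, Nat.cast_eq_zero]
    omega
  have hc : (P : ℝ≥0∞) ≤ (↑(P - P / 2) : ℝ≥0∞) * 2 := by
    have : P ≤ (P - P / 2) * 2 := by omega
    exact_mod_cast Nat.cast_le.mpr this
  have hone : (1 : ℝ≥0∞) ≤ (↑(P - P / 2) : ℝ≥0∞) * ((P : ℝ≥0∞)⁻¹ * 2) := by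
    calc (1 : ℝ≥0∞) = ↑P * (↑P)⁻¹ := (ENNReal.mul_inv_cancel hPne (natCast_ne_top P)).symm
      _ ≤ (↑(P - P / 2) * 2) * (↑P)⁻¹ := _root_.mul_le_mul_left hc _
      _ = ↑(P - P / 2) * ((↑P)⁻¹ * 2) := by ring
  have hconst : ∑' k : ℕ, (if P / 2 < k ∧ k ≤ P then (P : ℝ≥0∞)⁻¹ * 2 * Φ P else 0)
      = ↑(P - P / 2) * ((P : ℝ≥0∞)⁻¹ * 2 * Φ P) := by
    rw [tsum_eq_sum (s := Finset.Ioc (P / 2) P)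
      (fun k hk => if_neg (by simpa [Finset.mem_Ioc] using hk))]
    rw [Finset.sum_congr rfl fun k hk => if_pos (by simpa [Finset.mem_Ioc] using hk)]
    rw [Finset.sum_const, Nat.card_Ioc, nsmul_eq_mul]
  calc Φ P = 1 * Φ P := (one_mul _).symm
    _ ≤ (↑(P - P / 2) * ((P : ℝ≥0∞)⁻¹ * 2)) * Φ P := _root_.mul_le_mul_left hone _
    _ = ↑(P - P / 2) * ((P : ℝ≥0∞)⁻¹ * 2 * Φ P) := by ring
    _ = ∑' k : ℕ, (if P / 2 < k ∧ k ≤ P then (P : ℝ≥0∞)⁻¹ * 2 * Φ P else 0) := hconst.symm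
    _ ≤ _ := by
        refine ENNReal.tsum_le_tsum (fun k => ?_)
        split_ifs with h
        · exact _root_.mul_le_mul_right (hΦ h.2) _
        · exact le_rfl

-- inner bound
lemma inner_bound (Φ : ℕ → ℝ≥0∞) (n k : ℕ) :
    ∑' q : Fin n → ℤ, (if Pp q / 2 < k ∧ k ≤ Pp q then (Pp q : ℝ≥0∞)⁻¹ * 2 * Φ k else 0)
      ≤ if 1 ≤ k then (k : ℝ≥0∞)⁻¹ * 2 * Φ k * CNT n (2 * k + 1) else 0 := by
  rcases Nat.eq_zero_or_pos k with rfl | hk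
  · have h0 : ∀ q : Fin n → ℤ,
        (if Pp q / 2 < 0 ∧ 0 ≤ Pp q then (Pp q : ℝ≥0∞)⁻¹ * 2 * Φ 0 else 0) = 0 :=
      fun q => if_neg (by omega)
    rw [tsum_congr h0, tsum_zero]
    exact zero_le
  · have hk1 : 1 ≤ k := hk
    rw [if_pos hk1]
    have hrw : (k : ℝ≥0∞)⁻¹ * 2 * Φ k * CNT n (2 * k + 1)
        = ∑' q : Fin n → ℤ, ((k : ℝ≥0∞)⁻¹ * 2 * Φ k) * (if Pp q ≤ 2 * k + 1 then 1 else 0) := by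
      rw [ENNReal.tsum_mul_left]
      rfl
    rw [hrw]
    refine ENNReal.tsum_le_tsum (fun q => ?_)
    split_ifs with h h2
    · rw [mul_one]
      have hinv : (Pp q : ℝ≥0∞)⁻¹ ≤ (k : ℝ≥0∞)⁻¹ :=
        ENNReal.inv_le_inv.mpr (Nat.cast_le.mpr h.2)
      exact _root_.mul_le_mul_left (_root_.mul_le_mul_left hinv 2) _
    · exact absurd (by omega : Pp q ≤ 2 * k + 1) h2
    · exact zero_le
    · exact zero_le

end Stmt11Aux

open Stmt11Aux

/-- If `ψ` is non-increasing and `∑ (log k)^{n-1} ψ(k) < ∞`, then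
`∑_{q ∈ ℤⁿ, q ≠ 0} ψ(Π₊(q)) < ∞`, where `Π₊(q) = ∏ᵢ max(|qᵢ|, 1)`. -/
theorem stmt11 (n : ℕ) (hn : 0 < n) (ψ : ℕ → ℝ) (hpos : ∀ k, 0 ≤ ψ k)
    (hmono : Antitone ψ)
    (hsum : Summable fun k : ℕ => (Real.log k) ^ (n - 1) * ψ k) :
    Summable fun q : {q : Fin n → ℤ // q ≠ 0} =>
      ψ (∏ i, max (q.1 i).natAbs 1) := by
  classical
  obtain ⟨m, rfl⟩ : ∃ m, n = m + 1 := ⟨n - 1, by omega⟩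
  simp only [Nat.add_sub_cancel] at hsum
  set Φ : ℕ → ℝ≥0∞ := fun k => ENNReal.ofReal (ψ k) with hΦdef
  have hΦ : Antitone Φ := fun a b hab => ENNReal.ofReal_le_ofReal (hmono hab)
  -- auxiliary bounds for large k
  have hbig : ∀ k : ℕ, 3 ≤ k → B (2 * k + 1) ^ m * Φ k
      ≤ ENNReal.ofReal (3 ^ m) * ENNReal.ofReal (Real.log k ^ m * ψ k) := by
    intro k hk3
    have hk3' : (3 : ℝ) ≤ (k : ℝ) := by exact_mod_cast hk3
    have hlogk1 : 1 ≤ Real.log k := by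
      have h1 : Real.exp 1 ≤ (k : ℝ) := by
        have := Real.exp_one_lt_d9
        linarith
      calc (1 : ℝ) = Real.log (Real.exp 1) := (Real.log_exp 1).symm
        _ ≤ Real.log k := Real.log_le_log (Real.exp_pos 1) h1
    have hlog2 : Real.log (2 * k + 1 : ℕ) ≤ 2 * Real.log k := by
      have hle : ((2 * k + 1 : ℕ) : ℝ) ≤ (k : ℝ) ^ 2 := by
        push_cast
        nlinarith
      calc Real.log (2 * k + 1 : ℕ) ≤ Real.log ((k : ℝ) ^ 2) :=
            Real.log_le_log (by positivity) hle
        _ = 2 * Real.log k := by rw [Real.log_pow]; push_cast; ring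
    have hB : B (2 * k + 1) ≤ ENNReal.ofReal (3 * Real.log k) :=
      ENNReal.ofReal_le_ofReal (by push_cast at hlog2 ⊢; linarith)
    calc B (2 * k + 1) ^ m * Φ k
        ≤ ENNReal.ofReal (3 * Real.log k) ^ m * ENNReal.ofReal (ψ k) :=
          mul_le_mul' (pow_le_pow_left' hB m) le_rfl
      _ = ENNReal.ofReal ((3 * Real.log k) ^ m) * ENNReal.ofReal (ψ k) := by
          rw [ENNReal.ofReal_pow (by positivity)]
      _ = ENNReal.ofReal ((3 * Real.log k) ^ m * ψ k) := by
          rw [← ENNReal.ofReal_mul (by positivity)]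
      _ = ENNReal.ofReal (3 ^ m * (Real.log k ^ m * ψ k)) := by
          rw [mul_pow]; ring_nf
      _ = ENNReal.ofReal (3 ^ m) * ENNReal.ofReal (Real.log k ^ m * ψ k) := by
          rw [ENNReal.ofReal_mul (by positivity)]
  -- the main finiteness claim
  have main : (∑' q : Fin (m + 1) → ℤ, Φ (Pp q)) ≠ ⊤ := by
    set u : ℕ → ℝ≥0∞ := fun k =>
      if k < 3 then 6 * 9 ^ (m + 1) * B 7 ^ m * Φ 0 else 0 with hu
    set w : ℕ → ℝ≥0∞ := fun k =>
      6 * 9 ^ (m + 1) * (ENNReal.ofReal (3 ^ m)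
        * ENNReal.ofReal (Real.log k ^ m * ψ k)) with hw
    have chain : (∑' q : Fin (m + 1) → ℤ, Φ (Pp q)) ≤ ∑' k : ℕ, (u k + w k) := by
      calc (∑' q : Fin (m + 1) → ℤ, Φ (Pp q))
          ≤ ∑' q : Fin (m + 1) → ℤ, ∑' k : ℕ,
              (if Pp q / 2 < k ∧ k ≤ Pp q then (Pp q : ℝ≥0∞)⁻¹ * 2 * Φ k else 0) :=
            ENNReal.tsum_le_tsum (fun q => avg Φ hΦ (Pp q) (one_le_Pp q))
        _ = ∑' k : ℕ, ∑' q : Fin (m + 1) → ℤ,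
              (if Pp q / 2 < k ∧ k ≤ Pp q then (Pp q : ℝ≥0∞)⁻¹ * 2 * Φ k else 0) :=
            ENNReal.tsum_comm
        _ ≤ ∑' k : ℕ, (if 1 ≤ k then (k : ℝ≥0∞)⁻¹ * 2 * Φ k * CNT (m + 1) (2 * k + 1) else 0) :=
            ENNReal.tsum_le_tsum (fun k => inner_bound Φ (m + 1) k)
        _ ≤ ∑' k : ℕ, (u k + w k) := by
            refine ENNReal.tsum_le_tsum (fun k => ?_)
            split_ifs with hk
            · -- 1 ≤ k
              have hk0 : (k : ℝ≥0∞) ≠ 0 := by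
                simp only [ne_eq, Nat.cast_eq_zero]
                omega
              have hstep1 : (k : ℝ≥0∞)⁻¹ * 2 * Φ k * CNT (m + 1) (2 * k + 1)
                  ≤ 6 * 9 ^ (m + 1) * B (2 * k + 1) ^ m * Φ k := by
                have h6 : (2 : ℝ≥0∞) * (((2 * k + 1 : ℕ) : ℝ≥0∞) * (↑k)⁻¹) ≤ 6 := by
                  have h1 : ((2 * k + 1 : ℕ) : ℝ≥0∞) ≤ 3 * ↑k := by
                    have : (2 * k + 1 : ℕ) ≤ 3 * k := by omega
                    calc ((2 * k + 1 : ℕ) : ℝ≥0∞) ≤ ((3 * k : ℕ) : ℝ≥0∞) := Nat.cast_le.mpr this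
                      _ = 3 * ↑k := by push_cast; ring
                  calc (2 : ℝ≥0∞) * (↑(2 * k + 1) * (↑k)⁻¹)
                      ≤ 2 * (3 * ↑k * (↑k)⁻¹) :=
                        _root_.mul_le_mul_right (_root_.mul_le_mul_left h1 _) 2
                    _ = 2 * 3 := by
                        rw [mul_assoc (3 : ℝ≥0∞), ENNReal.mul_inv_cancel hk0 (natCast_ne_top k),
                          mul_one]
                    _ = 6 := by norm_num
                calc (k : ℝ≥0∞)⁻¹ * 2 * Φ k * CNT (m + 1) (2 * k + 1)
                    ≤ (k : ℝ≥0∞)⁻¹ * 2 * Φ k * (9 ^ (m + 1) * ↑(2 * k + 1) * B (2 * k + 1) ^ m) :=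
                      _root_.mul_le_mul_right (CNT_le m (2 * k + 1)) _
                  _ = (9 ^ (m + 1) * B (2 * k + 1) ^ m * Φ k)
                        * (2 * (((2 * k + 1 : ℕ) : ℝ≥0∞) * (↑k)⁻¹)) := by ring
                  _ ≤ (9 ^ (m + 1) * B (2 * k + 1) ^ m * Φ k) * 6 := _root_.mul_le_mul_right h6 _
                  _ = 6 * 9 ^ (m + 1) * B (2 * k + 1) ^ m * Φ k := by ring
              rcases Nat.lt_or_ge k 3 with hk3 | hk3
              · -- small k: bound by u k
                refine le_trans hstep1 (le_trans ?_ le_self_add)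
                rw [hu]
                simp only [if_pos hk3]
                exact mul_le_mul' (_root_.mul_le_mul_right
                  (pow_le_pow_left' (B_mono (by omega)) m) _) (hΦ (Nat.zero_le k))
              · -- large k: bound by w k
                refine le_trans hstep1 (le_trans ?_ le_add_self)
                rw [hw]
                calc 6 * 9 ^ (m + 1) * B (2 * k + 1) ^ m * Φ k
                    = 6 * 9 ^ (m + 1) * (B (2 * k + 1) ^ m * Φ k) := by ring
                  _ ≤ _ := _root_.mul_le_mul_right (hbig k hk3) _
            · exact zero_le
    refine ne_top_of_le_ne_top ?_ chain
    rw [ENNReal.tsum_add]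
    have hufin : (∑' k : ℕ, u k) ≠ ⊤ := by
      have huval : ∀ k ∉ Finset.range 3, u k = 0 := by
        intro k hk
        rw [hu]
        simp only [Finset.mem_range] at hk
        exact if_neg hk
      rw [tsum_eq_sum huval]
      refine (ENNReal.sum_lt_top.mpr fun k _ => ?_).ne
      have hval : u k = if k < 3 then 6 * 9 ^ (m + 1) * B 7 ^ m * Φ 0 else 0 := rfl
      rw [hval]
      split_ifs
      · exact (ENNReal.mul_ne_top (ENNReal.mul_ne_top
          (ENNReal.mul_ne_top (by norm_num) (ENNReal.pow_ne_top (by norm_num)))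
          (ENNReal.pow_ne_top (B_ne_top 7))) ENNReal.ofReal_ne_top).lt_top
      · simp
    have hwfin : (∑' k : ℕ, w k) ≠ ⊤ := by
      rw [hw]
      simp only
      rw [ENNReal.tsum_mul_left, ENNReal.tsum_mul_left]
      have hnn : ∀ k : ℕ, 0 ≤ Real.log k ^ m * ψ k :=
        fun k => mul_nonneg (pow_nonneg (log_nat_nonneg k) m) (hpos k)
      rw [← ENNReal.ofReal_tsum_of_nonneg hnn hsum]
      exact ENNReal.mul_ne_top (ENNReal.mul_ne_top (by norm_num)
        (ENNReal.pow_ne_top (by norm_num)))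
        (ENNReal.mul_ne_top ENNReal.ofReal_ne_top ENNReal.ofReal_ne_top)
    exact ENNReal.add_ne_top.mpr ⟨hufin, hwfin⟩
  -- conclude summability
  have hsub : (∑' q : {q : Fin (m + 1) → ℤ // q ≠ 0}, Φ (Pp q.1))
      ≤ ∑' q : Fin (m + 1) → ℤ, Φ (Pp q) :=
    ENNReal.tsum_comp_le_tsum_of_injective Subtype.coe_injective _
  have hfin2 : (∑' q : {q : Fin (m + 1) → ℤ // q ≠ 0}, Φ (Pp q.1)) ≠ ⊤ :=
    (lt_of_le_of_lt hsub main.lt_top).ne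
  have hs := ENNReal.summable_toReal hfin2
  refine hs.congr fun q => ?_
  rw [hΦdef]
  simp only
  rw [ENNReal.toReal_ofReal (hpos _)]
  rfl
end

section
/- Let x ∈ ℝⁿ and suppose there exist γ > 0 and infinitely many t ∈ ℤ₊ such that the lattice g_t Λ_x contains a nonzero vector of supremum norm at most e^{-γt}, where g_t = diag(e^{nt}, e^{-t}, …, e^{-t}) and Λ_x = {(p + x·q, q) : p ∈ ℤ, q ∈ ℤⁿ}. Then x is very well approximable, i.e. there exists ε > 0 such that |p + x·q| < ‖q‖^{-n(1+ε)} for infinitely many q ∈ ℤⁿ, p ∈ ℤ. -/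
open scoped BigOperators

/-!
A short vector `g_t (p + x·q, q)` with `‖·‖ ≤ e^{-γt}` gives `|p + x·q| ≤ e^{-(n+γ)t}` and
`0 < ‖q‖ ≤ e^t`, hence `|p + x·q| < ‖q‖^{-n(1+ε)}` as soon as `nε < γ`. These pairs cannot all
come from finitely many `(p, q)`: since `e^{-(n+γ)t} → 0`, one of them would satisfy
`p + x·q = 0`, and then all its nonzero integer multiples are approximations as well.
-/

open Real Filter Topology

variable {n : ℕ}

def linForm (x : Fin n → ℝ) (pq : ℤ × (Fin n → ℤ)) : ℝ :=
  pq.1 + ∑ i, x i * pq.2 i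

lemma linForm_smul (x : Fin n → ℝ) (m : ℤ) (pq : ℤ × (Fin n → ℤ)) :
    linForm x (m • pq) = m * linForm x pq := by
  simp only [linForm, Prod.smul_fst, Prod.smul_snd, Pi.smul_apply, smul_eq_mul, Int.cast_mul,
    mul_add, Finset.mul_sum]
  congr 1
  exact Finset.sum_congr rfl fun i _ => by ring

lemma norm_intCast_pos {q : Fin n → ℤ} (hq : q ≠ 0) : 0 < ‖(fun i => (q i : ℝ))‖ :=
  norm_pos_iff.mpr fun h => hq <| funext fun i => by simpa using congrFun h i

lemma infinite_setOf_linForm_eq_zero {x : Fin n → ℝ} {pq : ℤ × (Fin n → ℤ)} (hq : pq.2 ≠ 0)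
    (hx : linForm x pq = 0) : {pq : ℤ × (Fin n → ℤ) | pq.2 ≠ 0 ∧ linForm x pq = 0}.Infinite := by
  have hpq : pq ≠ 0 := fun h => hq (by rw [h]; rfl)
  refine (((Set.finite_singleton (0 : ℤ)).infinite_compl).image
    (smul_left_injective ℤ hpq).injOn).mono ?_
  rintro _ ⟨m, hm, rfl⟩
  exact ⟨smul_ne_zero hm hq, by rw [linForm_smul, hx, mul_zero]⟩

lemma norm_gAct_le_iff {t : ℕ} {w : Fin (n + 1) → ℝ} {r : ℝ} (hr : 0 ≤ r) :
    ‖gAct n t w‖ ≤ r ↔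
      exp (n * t) * |w 0| ≤ r ∧ ∀ i : Fin n, exp (-t) * |w i.succ| ≤ r := by
  simp [pi_norm_le_iff_of_nonneg hr, Fin.forall_fin_succ, gAct, abs_mul]

lemma exists_approx_of_mem_gAct_image {x : Fin n → ℝ} {γ : ℝ} (hγ : 0 < γ) {t : ℕ} (ht : 0 < t)
    {v : Fin (n + 1) → ℝ} (hv : v ∈ gAct n t '' Lambda n x) (hv0 : v ≠ 0)
    (hvn : ‖v‖ ≤ exp (-γ * t)) :
    ∃ pq : ℤ × (Fin n → ℤ), pq.2 ≠ 0 ∧ |linForm x pq| ≤ exp (-(n + γ) * t) ∧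
      ‖(fun i => (pq.2 i : ℝ))‖ ≤ exp t := by
  obtain ⟨_, ⟨p, q, rfl⟩, rfl⟩ := hv
  obtain ⟨hp, hq⟩ := (norm_gAct_le_iff (exp_pos _).le).mp hvn
  simp only [Fin.cons_zero, Fin.cons_succ] at hp hq
  have ha : |linForm x (p, q)| ≤ exp (-(n + γ) * t) :=
    calc |linForm x (p, q)| = exp (-(n * t)) * (exp (n * t) * |linForm x (p, q)|) := by
          rw [← mul_assoc, ← exp_add, neg_add_cancel, exp_zero, one_mul]
      _ ≤ exp (-(n * t)) * exp (-γ * t) := by gcongr; exact hp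
      _ = exp (-(n + γ) * t) := by rw [← exp_add]; ring_nf
  refine ⟨(p, q), fun hq0 => hv0 ?_, ha, ?_⟩
  · subst hq0
    have hp1 : |(p : ℝ)| < 1 := by
      refine (by simpa [linForm] using ha : |(p : ℝ)| ≤ _).trans_lt (exp_lt_one_iff.mpr ?_)
      have : (0 : ℝ) < t := by exact_mod_cast ht
      nlinarith
    have hp0 : p = 0 := Int.abs_lt_one_iff.mp (by exact_mod_cast hp1)
    funext i
    refine Fin.cases ?_ (fun j => ?_) i <;> simp [gAct, hp0]
  · refine (pi_norm_le_iff_of_nonneg (exp_pos _).le).mpr fun i => ?_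
    calc ‖(q i : ℝ)‖ = exp t * (exp (-t) * |(q i : ℝ)|) := by
          rw [← mul_assoc, ← exp_add, add_neg_cancel, exp_zero, one_mul, Real.norm_eq_abs]
      _ ≤ exp t * exp (-γ * t) := by gcongr; exact hq i
      _ ≤ exp t * 1 := by
          gcongr
          exact exp_le_one_iff.mpr (by nlinarith [(Nat.cast_nonneg t : (0 : ℝ) ≤ t)])
      _ = exp t := mul_one _

lemma abs_lt_rpow_of_le_exp {a r t s d : ℝ} (hr : 0 < r) (hrt : r ≤ exp t) (ht : 0 < t)
    (hs : s ≤ 0) (hds : -d < s) (ha : |a| ≤ exp (-d * t)) : |a| < r ^ s :=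
  calc |a| ≤ exp (-d * t) := ha
    _ < exp (t * s) := exp_lt_exp.mpr (by nlinarith)
    _ = exp t ^ s := exp_mul t s
    _ ≤ r ^ s := rpow_le_rpow_of_nonpos hr hrt hs

lemma finite_setOf_le_exp_neg_mul {a d : ℝ} (ha : 0 < a) (hd : 0 < d) :
    {t : ℕ | a ≤ exp (-d * t)}.Finite := by
  have hlim : Tendsto (fun t : ℕ => exp (-d * t)) atTop (𝓝 0) := by
    simpa only [neg_mul, Function.comp_def] using
      tendsto_exp_neg_atTop_nhds_zero.comp (tendsto_natCast_atTop_atTop.const_mul_atTop hd)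
  have := hlim.eventually (gt_mem_nhds ha)
  rw [← Nat.cofinite_eq_atTop, eventually_cofinite] at this
  simpa only [not_lt] using this

lemma infinite_setOf_abs_linForm_lt_rpow {x : Fin n → ℝ} {γ : ℝ} (hγ : 0 < γ)
    (h : {t : ℕ | 0 < t ∧ ∃ v ∈ gAct n t '' Lambda n x,
      v ≠ 0 ∧ ‖v‖ ≤ exp (-γ * t)}.Infinite) {s : ℝ} (hs : s ≤ 0) (hns : -(n + γ) < s) :
    {pq : ℤ × (Fin n → ℤ) | pq.2 ≠ 0 ∧
      |linForm x pq| < ‖(fun i => (pq.2 i : ℝ))‖ ^ s}.Infinite := by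
  set P := {pq : ℤ × (Fin n → ℤ) | pq.2 ≠ 0 ∧ |linForm x pq| < ‖(fun i => (pq.2 i : ℝ))‖ ^ s}
  intro hP
  have hcover : {t : ℕ | 0 < t ∧ ∃ v ∈ gAct n t '' Lambda n x, v ≠ 0 ∧ ‖v‖ ≤ exp (-γ * t)} ⊆
      ⋃ pq ∈ P, {t : ℕ | |linForm x pq| ≤ exp (-(n + γ) * t)} := by
    rintro t ⟨ht, v, hv, hv0, hvn⟩
    obtain ⟨pq, hq, ha, hqt⟩ := exists_approx_of_mem_gAct_image hγ ht hv hv0 hvn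
    exact Set.mem_biUnion (x := pq)
      ⟨hq, abs_lt_rpow_of_le_exp (norm_intCast_pos hq) hqt (by exact_mod_cast ht) hs hns ha⟩ ha
  obtain ⟨pq, ⟨hq, -⟩, hpq⟩ : ∃ pq ∈ P, linForm x pq = 0 := by
    by_contra! hne
    exact h <| (hP.biUnion fun pq hpq =>
      finite_setOf_le_exp_neg_mul (abs_pos.mpr (hne pq hpq)) (by positivity)).subset hcover
  refine (infinite_setOf_linForm_eq_zero hq hpq).mono ?_ hP
  rintro pq ⟨hq, hpq⟩
  exact ⟨hq, by rw [hpq, abs_zero]; exact rpow_pos_of_pos (norm_intCast_pos hq) s⟩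

/-- One direction of the Dani–Kleinbock–Margulis correspondence: if for some `γ > 0`
there are infinitely many `t ∈ ℤ₊` with a nonzero vector of `g_t Λ_x` of sup norm
at most `e^{-γt}`, then `x` is very well approximable. -/
theorem stmt18 (n : ℕ) (hn : 0 < n) (x : Fin n → ℝ) (γ : ℝ) (hγ : 0 < γ)
    (h : {t : ℕ | 0 < t ∧ ∃ v ∈ gAct n t '' Lambda n x,
      v ≠ 0 ∧ ‖v‖ ≤ Real.exp (-γ * t)}.Infinite) :
    ∃ ε : ℝ, 0 < ε ∧
      {pq : ℤ × (Fin n → ℤ) | pq.2 ≠ 0 ∧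
        |(pq.1 : ℝ) + ∑ i, x i * (pq.2 i : ℝ)| <
          ‖(fun i => (pq.2 i : ℝ) : Fin n → ℝ)‖ ^ (-(n : ℝ) * (1 + ε))}.Infinite := by
  have hn' : (0 : ℝ) < n := by exact_mod_cast hn
  refine ⟨γ / (2 * n), by positivity, infinite_setOf_abs_linForm_lt_rpow hγ h ?_ ?_⟩
  · have : 0 ≤ 1 + γ / (2 * n) := by positivity
    nlinarith
  · have : (n : ℝ) * (1 + γ / (2 * n)) = n + γ / 2 := by field_simp
    linarith
end
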